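/- arXiv:2311.03344 — 5 statements merged into one kernel-verified Lean document; each statement's English description precedes it below -/
import Mathlib

section
/- If A₁ and A₂ are order-d lattice subsets in diagonal sum (i.e., A₁ ⊆ X₁¹×⋯×X_d¹ and A₂ ⊆ X₁²×⋯×X_d² with X_j¹ ∩ X_j² = ∅ for every j), and M ⊆ P([d]) is non-empty and does not contain [d], then the M-covering number of A₁ ∪ A₂ equals the M-covering number of A₁ plus the M-covering number of A₂. -/
open Finset

/-- A `B`-subspace of `[n₁]×⋯×[n_d]`: the set of points agreeing with some point `u`
on all coordinates outside `B`. -/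
def IsBSubspace {d : ℕ} (n : Fin d → ℕ) (B : Finset (Fin d))
    (S : Set (∀ j, Fin (n j))) : Prop :=
  ∃ u : ∀ j, Fin (n j), S = {x | ∀ j ∉ B, x j = u j}

/-- An `M`-subspace: a `B`-subspace for some `B ∈ M`. -/
def IsMSubspace {d : ℕ} (n : Fin d → ℕ) (M : Finset (Finset (Fin d)))
    (S : Set (∀ j, Fin (n j))) : Prop :=
  ∃ B ∈ M, IsBSubspace n B S

/-- The `M`-covering number: the least `k` such that `A` is covered by `k` `M`-subspaces. -/
noncomputable def covM {d : ℕ} (n : Fin d → ℕ) (M : Finset (Finset (Fin d)))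
    (A : Set (∀ j, Fin (n j))) : ℕ :=
  sInf {k | ∃ S : Fin k → Set (∀ j, Fin (n j)),
    (∀ i, IsMSubspace n M (S i)) ∧ A ⊆ ⋃ i, S i}

/-!
Every `B`-subspace with `B ≠ [d]` fixes some coordinate, so it cannot meet both parts of a
diagonal sum. Hence the subspaces of an optimal cover of `A₁ ∪ A₂` split into a cover of `A₁`
and a disjoint cover of `A₂`, which gives `≥`; `≤` is the union of optimal covers.
-/

section Covering

variable {d : ℕ} {n : Fin d → ℕ} {M : Finset (Finset (Fin d))}

theorem IsBSubspace.exists_apply_eq {B : Finset (Fin d)} (hB : B ≠ univ)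
    {S : Set (∀ j, Fin (n j))} (hS : IsBSubspace n B S) {x y : ∀ j, Fin (n j)}
    (hx : x ∈ S) (hy : y ∈ S) : ∃ j, x j = y j := by
  obtain ⟨j, hj⟩ : ∃ j, j ∉ B := by simpa [eq_univ_iff_forall] using hB
  obtain ⟨u, rfl⟩ := hS
  exact ⟨j, (hx j hj).trans (hy j hj).symm⟩

theorem covM_le_card {ι : Type*} (t : Finset ι) (S : ι → Set (∀ j, Fin (n j)))
    (hS : ∀ i ∈ t, IsMSubspace n M (S i)) {A : Set (∀ j, Fin (n j))}
    (hA : A ⊆ ⋃ i ∈ t, S i) : covM n M A ≤ #t := by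
  refine Nat.sInf_le ⟨fun i => S (t.equivFin.symm i), fun i => hS _ (t.equivFin.symm i).2,
    fun x hx => ?_⟩
  obtain ⟨i, hi, hxi⟩ := Set.mem_iUnion₂.1 (hA hx)
  exact Set.mem_iUnion.2 ⟨t.equivFin ⟨i, hi⟩, by simpa using hxi⟩

theorem exists_cover_card_covM (hM : M.Nonempty) (A : Set (∀ j, Fin (n j))) :
    ∃ S : Fin (covM n M A) → Set (∀ j, Fin (n j)),
      (∀ i, IsMSubspace n M (S i)) ∧ A ⊆ ⋃ i, S i := by
  obtain ⟨B, hB⟩ := hM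
  let e := Fintype.equivFin (∀ j, Fin (n j))
  exact Nat.sInf_mem (s := {k | ∃ S : Fin k → Set (∀ j, Fin (n j)),
      (∀ i, IsMSubspace n M (S i)) ∧ A ⊆ ⋃ i, S i})
    ⟨Fintype.card (∀ j, Fin (n j)), fun i => {x | ∀ j ∉ B, x j = e.symm i j},
      fun i => ⟨B, hB, e.symm i, rfl⟩, fun x _ => Set.mem_iUnion.2 ⟨e x, by simp⟩⟩

theorem covM_union_le (hM : M.Nonempty) (A₁ A₂ : Set (∀ j, Fin (n j))) :
    covM n M (A₁ ∪ A₂) ≤ covM n M A₁ + covM n M A₂ := by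
  obtain ⟨S₁, hS₁, hA₁⟩ := exists_cover_card_covM hM A₁
  obtain ⟨S₂, hS₂, hA₂⟩ := exists_cover_card_covM hM A₂
  have hcover : A₁ ∪ A₂ ⊆ ⋃ i ∈ univ, Sum.elim S₁ S₂ i := by
    simp only [mem_univ, Set.iUnion_true, Set.iUnion_sum, Sum.elim_inl, Sum.elim_inr]
    exact Set.union_subset_union hA₁ hA₂
  simpa using covM_le_card univ (Sum.elim S₁ S₂) (by simp [Sum.forall, hS₁, hS₂]) hcover

theorem covM_add_le_union (hM : M.Nonempty) {A₁ A₂ : Set (∀ j, Fin (n j))}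
    (hsep : ∀ S, IsMSubspace n M S → (S ∩ A₁).Nonempty → (S ∩ A₂).Nonempty → False) :
    covM n M A₁ + covM n M A₂ ≤ covM n M (A₁ ∪ A₂) := by
  classical
  obtain ⟨S, hS, hA⟩ := exists_cover_card_covM hM (A₁ ∪ A₂)
  let meets (A : Set (∀ j, Fin (n j))) := univ.filter fun i => (S i ∩ A).Nonempty
  have hcover (A) (hA' : A ⊆ A₁ ∪ A₂) : covM n M A ≤ #(meets A) := by
    refine covM_le_card _ S (fun i _ => hS i) fun x hx => ?_
    obtain ⟨i, hi⟩ := Set.mem_iUnion.1 (hA (hA' hx))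
    exact Set.mem_iUnion₂.2 ⟨i, mem_filter.2 ⟨mem_univ _, x, hi, hx⟩, hi⟩
  have hdisj : Disjoint (meets A₁) (meets A₂) := disjoint_filter.2 fun i _ => hsep _ (hS i)
  calc covM n M A₁ + covM n M A₂
      ≤ #(meets A₁) + #(meets A₂) :=
        add_le_add (hcover A₁ Set.subset_union_left) (hcover A₂ Set.subset_union_right)
    _ = #(meets A₁ ∪ meets A₂) := (card_union_of_disjoint hdisj).symm
    _ ≤ covM n M (A₁ ∪ A₂) := by simpa using card_le_univ (meets A₁ ∪ meets A₂)

end Covering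

theorem diagonal_sum_additive_general {d : ℕ} (n : Fin d → ℕ)
    (M : Finset (Finset (Fin d))) (hM : M.Nonempty) (hMd : Finset.univ ∉ M)
    (A₁ A₂ : Set (∀ j, Fin (n j))) (X₁ X₂ : ∀ j, Set (Fin (n j)))
    (h₁ : A₁ ⊆ {x | ∀ j, x j ∈ X₁ j}) (h₂ : A₂ ⊆ {x | ∀ j, x j ∈ X₂ j})
    (hdisj : ∀ j, X₁ j ∩ X₂ j = ∅) :
    covM n M (A₁ ∪ A₂) = covM n M A₁ + covM n M A₂ := by
  refine (covM_union_le hM A₁ A₂).antisymm (covM_add_le_union hM ?_)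
  rintro S ⟨B, hB, hSB⟩ ⟨x, hxS, hxA⟩ ⟨y, hyS, hyA⟩
  obtain ⟨j, hj⟩ := hSB.exists_apply_eq (ne_of_mem_of_not_mem hB hMd) hxS hyS
  have hmem : x j ∈ X₁ j ∩ X₂ j := ⟨h₁ hxA j, hj ▸ h₂ hyA j⟩
  simp [hdisj j] at hmem

theorem diagonal_sum_additive {d : ℕ} (hd : 0 < d) (n : Fin d → ℕ) (hn : ∀ j, 0 < n j)
    (M : Finset (Finset (Fin d))) (hM : M.Nonempty) (hMd : Finset.univ ∉ M)
    (A₁ A₂ : Set (∀ j, Fin (n j))) (X₁ X₂ : ∀ j, Set (Fin (n j)))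
    (h₁ : A₁ ⊆ {x | ∀ j, x j ∈ X₁ j}) (h₂ : A₂ ⊆ {x | ∀ j, x j ∈ X₂ j})
    (hdisj : ∀ j, X₁ j ∩ X₂ j = ∅) :
    covM n M (A₁ ∪ A₂) = covM n M A₁ + covM n M A₂ :=
  diagonal_sum_additive_general n M hM hMd A₁ A₂ X₁ X₂ h₁ h₂ hdisj
end

section
/- Let d ≥ 1, let M₁, M₂ ⊆ P([d]) be non-empty, and let k₁, k₂ be nonnegative integers. If A is an order-d lattice subset with cov_{M₁}(A) ≤ k₁ and cov_{M₂}(A) ≤ k₂, then cov_{M₁∧M₂}(A) ≤ k₁·k₂, where M₁ ∧ M₂ = {B₁ ∩ B₂ : B₁ ∈ M₁, B₂ ∈ M₂}. -/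
open Finset

/-!
A point of `S₁ ∩ S₂`, for a `B₁`-subspace `S₁` and a `B₂`-subspace `S₂`, has its coordinates
outside `B₁` fixed by `S₁` and those outside `B₂` fixed by `S₂`, hence all those outside
`B₁ ∩ B₂` fixed; so `S₁ ∩ S₂` lies in a single `(B₁ ∩ B₂)`-subspace. Intersecting a cover by
`k₁` `M₁`-subspaces with one by `k₂` `M₂`-subspaces therefore gives a cover by `k₁ k₂`
subspaces of the wedge. When `A` admits no `M₁`-cover at all it admits no wedge cover either,
and both covering numbers are `sInf ∅ = 0`.
-/

section

variable {d : ℕ} {n : Fin d → ℕ}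

def coverSizes (n : Fin d → ℕ) (M : Finset (Finset (Fin d))) (A : Set (∀ j, Fin (n j))) :
    Set ℕ :=
  {k | ∃ S : Fin k → Set (∀ j, Fin (n j)), (∀ i, IsMSubspace n M (S i)) ∧ A ⊆ ⋃ i, S i}

lemma covM_eq_sInf_coverSizes (M : Finset (Finset (Fin d))) (A : Set (∀ j, Fin (n j))) :
    covM n M A = sInf (coverSizes n M A) :=
  rfl

lemma card_mem_coverSizes {M : Finset (Finset (Fin d))} {A : Set (∀ j, Fin (n j))}
    {ι : Type*} [Fintype ι] (S : ι → Set (∀ j, Fin (n j))) (hS : ∀ i, IsMSubspace n M (S i))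
    (hA : A ⊆ ⋃ i, S i) : Fintype.card ι ∈ coverSizes n M A := by
  let e := Fintype.equivFin ι
  refine ⟨S ∘ e.symm, fun i => hS _, hA.trans fun x hx => ?_⟩
  obtain ⟨i, hi⟩ := Set.mem_iUnion.1 hx
  exact Set.mem_iUnion.2 ⟨e i, by simpa using hi⟩

lemma IsBSubspace.exists_superset_of_subset {B B' : Finset (Fin d)} {S : Set (∀ j, Fin (n j))}
    (hS : IsBSubspace n B S) (hB : B ⊆ B') : ∃ S', IsBSubspace n B' S' ∧ S ⊆ S' := by
  obtain ⟨u, rfl⟩ := hS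
  exact ⟨_, ⟨u, rfl⟩, fun x hx j hj => hx j fun hjB => hj (hB hjB)⟩

lemma IsBSubspace.exists_inter_subset {B₁ B₂ : Finset (Fin d)} {S₁ S₂ : Set (∀ j, Fin (n j))}
    (h₁ : IsBSubspace n B₁ S₁) (h₂ : IsBSubspace n B₂ S₂) :
    ∃ S, IsBSubspace n (B₁ ∩ B₂) S ∧ S₁ ∩ S₂ ⊆ S := by
  obtain ⟨u₁, rfl⟩ := h₁
  obtain ⟨u₂, rfl⟩ := h₂
  refine ⟨_, ⟨fun j => if j ∈ B₁ then u₂ j else u₁ j, rfl⟩, fun x ⟨hx₁, hx₂⟩ j hj => ?_⟩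
  by_cases hjB₁ : j ∈ B₁
  · simpa [hjB₁] using hx₂ j fun hjB₂ => hj (mem_inter.2 ⟨hjB₁, hjB₂⟩)
  · simpa [hjB₁] using hx₁ j hjB₁

lemma coverSizes_mono_of_forall_subset {M M' : Finset (Finset (Fin d))}
    (hM : ∀ B ∈ M, ∃ B' ∈ M', B ⊆ B') (A : Set (∀ j, Fin (n j))) :
    coverSizes n M A ⊆ coverSizes n M' A := by
  rintro k ⟨S, hS, hA⟩
  have hsup : ∀ i, ∃ S', IsMSubspace n M' S' ∧ S i ⊆ S' := fun i => by
    obtain ⟨B, hB, hSi⟩ := hS i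
    obtain ⟨B', hB', hBB'⟩ := hM B hB
    obtain ⟨S', hS', hsub⟩ := hSi.exists_superset_of_subset hBB'
    exact ⟨S', ⟨B', hB', hS'⟩, hsub⟩
  choose S' hS' hsub using hsup
  exact ⟨S', hS', hA.trans (Set.iUnion_mono hsub)⟩

lemma mul_mem_coverSizes_wedge {M₁ M₂ : Finset (Finset (Fin d))} {A : Set (∀ j, Fin (n j))}
    {k₁ k₂ : ℕ} (h₁ : k₁ ∈ coverSizes n M₁ A) (h₂ : k₂ ∈ coverSizes n M₂ A) :
    k₁ * k₂ ∈ coverSizes n ((M₁ ×ˢ M₂).image fun p => p.1 ∩ p.2) A := by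
  obtain ⟨S, hS, hAS⟩ := h₁
  obtain ⟨T, hT, hAT⟩ := h₂
  have hinter : ∀ p : Fin k₁ × Fin k₂, ∃ U,
      IsMSubspace n ((M₁ ×ˢ M₂).image fun p => p.1 ∩ p.2) U ∧ S p.1 ∩ T p.2 ⊆ U := fun p => by
    obtain ⟨B₁, hB₁, hS₁⟩ := hS p.1
    obtain ⟨B₂, hB₂, hT₂⟩ := hT p.2
    obtain ⟨U, hU, hsub⟩ := hS₁.exists_inter_subset hT₂
    exact ⟨U, ⟨B₁ ∩ B₂, mem_image.2 ⟨(B₁, B₂), mem_product.2 ⟨hB₁, hB₂⟩, rfl⟩, hU⟩, hsub⟩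
  choose U hU hsub using hinter
  have hAU : A ⊆ ⋃ p, U p := fun x hx => by
    obtain ⟨i, hi⟩ := Set.mem_iUnion.1 (hAS hx)
    obtain ⟨i', hi'⟩ := Set.mem_iUnion.1 (hAT hx)
    exact Set.mem_iUnion.2 ⟨(i, i'), hsub _ ⟨hi, hi'⟩⟩
  simpa using card_mem_coverSizes U hU hAU

end

theorem covM_wedge_general {d : ℕ} (n : Fin d → ℕ)
    (M₁ M₂ : Finset (Finset (Fin d)))
    (k₁ k₂ : ℕ) (A : Set (∀ j, Fin (n j)))
    (hA₁ : covM n M₁ A ≤ k₁) (hA₂ : covM n M₂ A ≤ k₂) :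
    covM n ((M₁ ×ˢ M₂).image fun p => p.1 ∩ p.2) A ≤ k₁ * k₂ := by
  set W := (M₁ ×ˢ M₂).image fun p => p.1 ∩ p.2
  have hW₁ : coverSizes n W A ⊆ coverSizes n M₁ A :=
    coverSizes_mono_of_forall_subset (by
      simp only [W, forall_mem_image, mem_product, Prod.forall]
      exact fun B₁ _ hB => ⟨B₁, hB.1, inter_subset_left⟩) A
  have hW₂ : coverSizes n W A ⊆ coverSizes n M₂ A :=
    coverSizes_mono_of_forall_subset (by
      simp only [W, forall_mem_image, mem_product, Prod.forall]
      exact fun _ B₂ hB => ⟨B₂, hB.2, inter_subset_right⟩) A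
  rw [covM_eq_sInf_coverSizes] at hA₁ hA₂ ⊢
  rcases (coverSizes n M₁ A).eq_empty_or_nonempty with h₁ | h₁
  · simp [Set.subset_empty_iff.1 (h₁ ▸ hW₁)]
  rcases (coverSizes n M₂ A).eq_empty_or_nonempty with h₂ | h₂
  · simp [Set.subset_empty_iff.1 (h₂ ▸ hW₂)]
  calc sInf (coverSizes n W A)
      ≤ sInf (coverSizes n M₁ A) * sInf (coverSizes n M₂ A) :=
        Nat.sInf_le (mul_mem_coverSizes_wedge (Nat.sInf_mem h₁) (Nat.sInf_mem h₂))
    _ ≤ k₁ * k₂ := Nat.mul_le_mul hA₁ hA₂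

theorem covM_wedge {d : ℕ} (hd : 0 < d) (n : Fin d → ℕ) (hn : ∀ j, 0 < n j)
    (M₁ M₂ : Finset (Finset (Fin d))) (hM₁ : M₁.Nonempty) (hM₂ : M₂.Nonempty)
    (k₁ k₂ : ℕ) (A : Set (∀ j, Fin (n j)))
    (hA₁ : covM n M₁ A ≤ k₁) (hA₂ : covM n M₂ A ≤ k₂) :
    covM n ((M₁ ×ˢ M₂).image fun p => p.1 ∩ p.2) A ≤ k₁ * k₂ :=
  covM_wedge_general n M₁ M₂ k₁ k₂ A hA₁ hA₂
end

section
/- Let d, l ≥ 1 be integers and let M ⊆ P([d]) be non-empty. If A is an order-d lattice subset with cov_M(A) ≥ |M|·l, then there exist subsets X₁ ⊆ [n₁], …, X_d ⊆ [n_d], each of size at most l, such that cov_M(A ∩ (X₁×⋯×X_d)) ≥ l. -/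
/-!
Choose points of `A` greedily so that no `M`-subspace contains two of them. While fewer than `l`
points are chosen, say `t`, the `t·|M|` subspaces through them cannot cover `A`, since
`cov_M(A) ≥ |M|·l`; so a further point can be chosen. Taking `X_j` to be the set of `j`-th
coordinates of the `l` chosen points, the box `X₁×⋯×X_d` contains them all, and each `M`-subspace
covers at most one of them.
-/

open Finset

section Covering

variable {d : ℕ} {n : Fin d → ℕ} {M : Finset (Finset (Fin d))}

/-- No `M`-subspace contains both `x` and `y`. -/
def MSeparated (M : Finset (Finset (Fin d))) (x y : ∀ j, Fin (n j)) : Prop :=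
  ∀ B ∈ M, ∃ j ∉ B, x j ≠ y j

theorem MSeparated.symm {x y : ∀ j, Fin (n j)} (h : MSeparated M x y) : MSeparated M y x :=
  fun B hB => (h B hB).imp fun _ ⟨hj, hne⟩ => ⟨hj, hne.symm⟩

theorem MSeparated.ne (hM : M.Nonempty) {x y : ∀ j, Fin (n j)} (h : MSeparated M x y) :
    x ≠ y := by
  rintro rfl
  obtain ⟨B, hB⟩ := hM
  obtain ⟨j, -, hj⟩ := h B hB
  exact hj rfl

theorem IsMSubspace.not_mSeparated {S : Set (∀ j, Fin (n j))} (hS : IsMSubspace n M S)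
    {x y : ∀ j, Fin (n j)} (hx : x ∈ S) (hy : y ∈ S) : ¬MSeparated M x y := by
  obtain ⟨B, hB, u, rfl⟩ := hS
  intro h
  obtain ⟨j, hj, hne⟩ := h B hB
  exact hne ((hx j hj).trans (hy j hj).symm)

theorem covM_le_of_subset_iUnion {ι : Type*} [Fintype ι] {S : ι → Set (∀ j, Fin (n j))}
    (hS : ∀ i, IsMSubspace n M (S i)) {A : Set (∀ j, Fin (n j))} (hA : A ⊆ ⋃ i, S i) :
    covM n M A ≤ Fintype.card ι := by
  let e := (Fintype.equivFin ι).symm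
  refine Nat.sInf_le ⟨S ∘ e, fun k => hS (e k), ?_⟩
  rwa [Function.comp_def, e.surjective.iUnion_comp]

theorem covM_set_nonempty (hM : M.Nonempty) (A : Set (∀ j, Fin (n j))) :
    {k | ∃ S : Fin k → Set (∀ j, Fin (n j)),
      (∀ i, IsMSubspace n M (S i)) ∧ A ⊆ ⋃ i, S i}.Nonempty := by
  obtain ⟨B, hB⟩ := hM
  let e := (Fintype.equivFin (∀ j, Fin (n j))).symm
  refine ⟨_, fun k => {x | ∀ j ∉ B, x j = e k j}, fun k => ⟨B, hB, e k, rfl⟩, fun x _ => ?_⟩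
  exact Set.mem_iUnion.2 ⟨e.symm x, fun j _ => by simp⟩

theorem card_le_covM_of_pairwise_mSeparated (hM : M.Nonempty) {A : Set (∀ j, Fin (n j))}
    {P : Finset (∀ j, Fin (n j))} (hPA : ↑P ⊆ A)
    (hP : (P : Set (∀ j, Fin (n j))).Pairwise (MSeparated M)) :
    #P ≤ covM n M A := by
  refine le_csInf (covM_set_nonempty hM A) ?_
  rintro k ⟨S, hS, hAS⟩
  choose f hf using fun p : P => Set.mem_iUnion.1 (hAS (hPA p.2))
  have hf_inj : Function.Injective f := fun p q hpq => by
    by_contra hne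
    refine (hS (f q)).not_mSeparated (hpq ▸ hf p) (hf q) (hP p.2 q.2 ?_)
    exact fun h => hne (Subtype.ext h)
  simpa using Fintype.card_le_of_injective f hf_inj

theorem exists_mSeparated_of_card_mul_lt_covM {A : Set (∀ j, Fin (n j))}
    (P : Finset (∀ j, Fin (n j))) (hP : #M * #P < covM n M A) :
    ∃ p ∈ A, ∀ x ∈ P, MSeparated M x p := by
  by_contra! h
  have hcover : A ⊆ ⋃ xB : ↥(P ×ˢ M), {y | ∀ j ∉ xB.1.2, y j = xB.1.1 j} := by
    intro p hp
    obtain ⟨x, hx, hxp⟩ := h p hp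
    simp only [MSeparated, not_forall, not_exists, not_and, not_not] at hxp
    obtain ⟨B, hB, hpB⟩ := hxp
    exact Set.mem_iUnion.2 ⟨⟨(x, B), mem_product.2 ⟨hx, hB⟩⟩, fun j hj => (hpB j hj).symm⟩
  have := covM_le_of_subset_iUnion (fun xB => ⟨_, (mem_product.1 xB.2).2, _, rfl⟩) hcover
  rw [Fintype.card_coe, card_product] at this
  linarith

theorem exists_pairwise_mSeparated (hM : M.Nonempty) {A : Set (∀ j, Fin (n j))} :
    ∀ t, #M * t ≤ covM n M A →
      ∃ P : Finset (∀ j, Fin (n j)),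
        #P = t ∧ ↑P ⊆ A ∧ (P : Set (∀ j, Fin (n j))).Pairwise (MSeparated M)
  | 0, _ => ⟨∅, rfl, by simp, by simp⟩
  | t + 1, ht => by
    have hlt : #M * t < covM n M A :=
      (Nat.mul_lt_mul_left (card_pos.2 hM)).2 t.lt_succ_self |>.trans_le ht
    obtain ⟨P, rfl, hPA, hP⟩ := exists_pairwise_mSeparated hM t hlt.le
    obtain ⟨p, hpA, hp⟩ := exists_mSeparated_of_card_mul_lt_covM P hlt
    have hpP : p ∉ P := fun h => (hp p h).ne hM rfl
    refine ⟨insert p P, card_insert_of_notMem hpP, ?_, ?_⟩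
    · rw [coe_insert]
      exact Set.insert_subset hpA hPA
    · rw [coe_insert]
      exact hP.insert fun x hx _ => ⟨(hp x hx).symm, hp x hx⟩

end Covering

theorem linear_bound_for_lattice_subsets_general {d l : ℕ}
    (n : Fin d → ℕ)
    (M : Finset (Finset (Fin d))) (hM : M.Nonempty)
    (A : Set (∀ j, Fin (n j))) (hA : M.card * l ≤ covM n M A) :
    ∃ X : ∀ j, Finset (Fin (n j)), (∀ j, (X j).card ≤ l) ∧
      l ≤ covM n M (A ∩ {x | ∀ j, x j ∈ X j}) := by
  obtain ⟨P, rfl, hPA, hP⟩ := exists_pairwise_mSeparated hM l hA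
  refine ⟨fun j => P.image (· j), fun j => card_image_le, ?_⟩
  exact card_le_covM_of_pairwise_mSeparated hM
    (fun p hp => ⟨hPA hp, fun j => mem_image_of_mem _ hp⟩) hP

theorem linear_bound_for_lattice_subsets {d l : ℕ} (hd : 0 < d) (hl : 0 < l)
    (n : Fin d → ℕ) (hn : ∀ j, 0 < n j)
    (M : Finset (Finset (Fin d))) (hM : M.Nonempty)
    (A : Set (∀ j, Fin (n j))) (hA : M.card * l ≤ covM n M A) :
    ∃ X : ∀ j, Finset (Fin (n j)), (∀ j, (X j).card ≤ l) ∧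
      l ≤ covM n M (A ∩ {x | ∀ j, x j ∈ X j}) :=
  linear_bound_for_lattice_subsets_general n M hM A hA
end

section
/- Let d, l ≥ 1 be integers and let M ⊆ P([d]) be non-empty. If A is an order-d lattice subset with cov_M(A) = l, then there are at most (|M|·l^d)^l tuples (S₁, …, S_l) of M-subspaces such that A ⊆ S₁ ∪ ⋯ ∪ S_l. -/
open Finset

/-- A `B`-subspace containing `a` is the set of points agreeing with `a` outside `B`. -/
lemma bsub_eq_of_mem {d : ℕ} {n : Fin d → ℕ} {B : Finset (Fin d)}
    {S : Set (∀ j, Fin (n j))} (h : IsBSubspace n B S)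
    {a : ∀ j, Fin (n j)} (ha : a ∈ S) : S = {x | ∀ j ∉ B, x j = a j} := by
  obtain ⟨u, rfl⟩ := h
  ext x
  constructor
  · intro hx j hj
    rw [hx j hj, ha j hj]
  · intro hx j hj
    rw [hx j hj, ← ha j hj]

lemma covM_le {d : ℕ} {n : Fin d → ℕ} {M : Finset (Finset (Fin d))}
    {A : Set (∀ j, Fin (n j))} {k : ℕ} (S : Fin k → Set (∀ j, Fin (n j)))
    (h1 : ∀ i, IsMSubspace n M (S i)) (h2 : A ⊆ ⋃ i, S i) : covM n M A ≤ k :=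
  Nat.sInf_le ⟨S, h1, h2⟩

lemma ncard_biUnion_le {ι α : Type*} [Finite α] (s : Finset ι) (t : ι → Set α) :
    (⋃ i ∈ s, t i).ncard ≤ ∑ i ∈ s, (t i).ncard := by
  classical
  induction s using Finset.induction with
  | empty => simp
  | insert _ _ h ih =>
    rename_i a s'
    rw [Finset.set_biUnion_insert, Finset.sum_insert h]
    exact le_trans (Set.ncard_union_le _ _) (Nat.add_le_add_left ih _)

lemma covM_diff {d l : ℕ} {n : Fin d → ℕ} {M : Finset (Finset (Fin d))}
    {A : Set (∀ j, Fin (n j))} (hA : covM n M A = l + 1)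
    {S₀ : Set (∀ j, Fin (n j))} (hS₀ : IsMSubspace n M S₀)
    (S : Fin (l + 1) → Set (∀ j, Fin (n j))) (hS : ∀ i, IsMSubspace n M (S i))
    (hcov : A ⊆ ⋃ i, S i) (i : Fin (l + 1)) (hi : S i = S₀) :
    covM n M (A \ S₀) = l := by
  have hup : covM n M (A \ S₀) ≤ l := by
    refine covM_le (fun j => S (i.succAbove j)) (fun j => hS _) ?_
    intro x hx
    obtain ⟨t, ht⟩ := Set.mem_iUnion.mp (hcov hx.1)
    have hti : t ≠ i := by
      rintro rfl
      exact hx.2 (hi ▸ ht)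
    obtain ⟨j, rfl⟩ := Fin.exists_succAbove_eq hti
    exact Set.mem_iUnion.mpr ⟨j, ht⟩
  -- lower bound
  have hne : {k | ∃ R : Fin k → Set (∀ j, Fin (n j)),
      (∀ i, IsMSubspace n M (R i)) ∧ A \ S₀ ⊆ ⋃ i, R i}.Nonempty := by
    refine ⟨l, fun j => S (i.succAbove j), fun j => hS _, ?_⟩
    intro x hx
    obtain ⟨t, ht⟩ := Set.mem_iUnion.mp (hcov hx.1)
    have hti : t ≠ i := by
      rintro rfl
      exact hx.2 (hi ▸ ht)
    obtain ⟨j, rfl⟩ := Fin.exists_succAbove_eq hti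
    exact Set.mem_iUnion.mpr ⟨j, ht⟩
  obtain ⟨R, hR1, hR2⟩ := Nat.sInf_mem hne
  have hlow : l + 1 ≤ covM n M (A \ S₀) + 1 := by
    rw [← hA]
    refine covM_le (Fin.cons S₀ R) ?_ ?_
    · intro j
      refine Fin.cases ?_ ?_ j
      · exact hS₀
      · intro j'; exact hR1 j'
    · intro x hx
      by_cases hx0 : x ∈ S₀
      · exact Set.mem_iUnion.mpr ⟨0, by exact hx0⟩
      · obtain ⟨j, hj⟩ := Set.mem_iUnion.mp (hR2 ⟨hx, hx0⟩)
        exact Set.mem_iUnion.mpr ⟨j.succ, by exact hj⟩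
  omega

lemma key_lemma {d : ℕ} (hd : 0 < d) (n : Fin d → ℕ) (M : Finset (Finset (Fin d))) :
    ∀ l : ℕ, ∀ A : Set (∀ j, Fin (n j)), covM n M A = l →
    {S : Fin l → Set (∀ j, Fin (n j)) |
      (∀ i, IsMSubspace n M (S i)) ∧ A ⊆ ⋃ i, S i}.ncard ≤ (M.card * l ^ d) ^ l := by
  intro l
  induction l with
  | zero =>
    intro A _
    calc {S : Fin 0 → Set (∀ j, Fin (n j)) |
        (∀ i, IsMSubspace n M (S i)) ∧ A ⊆ ⋃ i, S i}.ncard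
        ≤ (Set.univ : Set (Fin 0 → Set (∀ j, Fin (n j)))).ncard :=
          Set.ncard_le_ncard (Set.subset_univ _) (Set.toFinite _)
      _ = Nat.card (Fin 0 → Set (∀ j, Fin (n j))) := Set.ncard_univ _
      _ ≤ 1 := le_of_eq Nat.card_unique
      _ = (M.card * 0 ^ d) ^ 0 := (pow_zero _).symm
  | succ l ih =>
    intro A hA
    -- A is nonempty
    obtain ⟨a, haA⟩ : A.Nonempty := by
      rw [Set.nonempty_iff_ne_empty]
      rintro rfl
      have : covM n M (∅ : Set (∀ j, Fin (n j))) = 0 := by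
        apply le_antisymm _ (Nat.zero_le _)
        exact covM_le (fun i : Fin 0 => ∅) (fun i => i.elim0) (by simp)
      omega
    classical
    set Cov := {S : Fin (l + 1) → Set (∀ j, Fin (n j)) |
      (∀ i, IsMSubspace n M (S i)) ∧ A ⊆ ⋃ i, S i} with hCov
    set S₀ : Finset (Fin d) → Set (∀ j, Fin (n j)) :=
      fun B => {x | ∀ j ∉ B, x j = a j} with hS₀def
    set T : Fin (l + 1) × Finset (Fin d) → Set (Fin (l + 1) → Set (∀ j, Fin (n j))) :=
      fun p => {S ∈ Cov | S p.1 = S₀ p.2} with hTdef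
    have hsub : Cov ⊆ ⋃ p ∈ Finset.univ ×ˢ M, T p := by
      intro S hS
      obtain ⟨i, hi⟩ := Set.mem_iUnion.mp (hS.2 haA)
      obtain ⟨B, hB, hBsub⟩ := hS.1 i
      simp only [Set.mem_iUnion]
      exact ⟨(i, B), Finset.mem_product.mpr ⟨Finset.mem_univ i, hB⟩, hS, bsub_eq_of_mem hBsub hi⟩
    have hT : ∀ p ∈ Finset.univ ×ˢ M, (T p).ncard ≤ (M.card * l ^ d) ^ l := by
      rintro ⟨i, B⟩ hp
      rcases Set.eq_empty_or_nonempty (T (i, B)) with he | ⟨S, hSmem⟩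
      · rw [he]; simp
      · have hScov : S ∈ Cov := hSmem.1
        have hSi : S i = S₀ B := hSmem.2
        have hMsub : IsMSubspace n M (S₀ B) :=
          ⟨B, (Finset.mem_product.mp hp).2, a, rfl⟩
        have hcovd : covM n M (A \ S₀ B) = l :=
          covM_diff hA hMsub S hScov.1 hScov.2 i hSi
        calc (T (i, B)).ncard
            ≤ {R : Fin l → Set (∀ j, Fin (n j)) |
                (∀ i, IsMSubspace n M (R i)) ∧ A \ S₀ B ⊆ ⋃ i, R i}.ncard := by
              refine Set.ncard_le_ncard_of_injOn (fun S => S ∘ i.succAbove) ?_ ?_ (Set.toFinite _)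
              · rintro S' ⟨⟨h1, h2⟩, h3⟩
                refine ⟨fun j => h1 _, ?_⟩
                intro x hx
                obtain ⟨t, ht⟩ := Set.mem_iUnion.mp (h2 hx.1)
                have hti : t ≠ i := by
                  rintro rfl
                  exact hx.2 (h3 ▸ ht)
                obtain ⟨j, rfl⟩ := Fin.exists_succAbove_eq hti
                exact Set.mem_iUnion.mpr ⟨j, ht⟩
              · rintro S1 ⟨_, hS1⟩ S2 ⟨_, hS2⟩ heq
                funext t
                by_cases hti : t = i
                · rw [hti, hS1, hS2]
                · obtain ⟨j, rfl⟩ := Fin.exists_succAbove_eq hti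
                  exact congrFun heq j
          _ ≤ (M.card * l ^ d) ^ l := ih _ hcovd
    calc Cov.ncard ≤ (⋃ p ∈ Finset.univ ×ˢ M, T p).ncard :=
          Set.ncard_le_ncard hsub (Set.toFinite _)
      _ ≤ ∑ p ∈ Finset.univ ×ˢ M, (T p).ncard := ncard_biUnion_le _ _
      _ ≤ ∑ _p ∈ Finset.univ ×ˢ M, (M.card * l ^ d) ^ l := Finset.sum_le_sum hT
      _ = (l + 1) * M.card * (M.card * l ^ d) ^ l := by
          rw [Finset.sum_const, Finset.card_product, Finset.card_univ, Fintype.card_fin,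
            smul_eq_mul, mul_assoc]
      _ ≤ (M.card * (l + 1) ^ d) ^ (l + 1) := by
          have h1 : (M.card * l ^ d) ^ l ≤ (M.card * (l + 1) ^ d) ^ l := by
            gcongr
            omega
          have h2 : (l + 1) * M.card ≤ M.card * (l + 1) ^ d := by
            rw [mul_comm]
            exact Nat.mul_le_mul_left _ (Nat.le_self_pow hd.ne' _)
          calc (l + 1) * M.card * (M.card * l ^ d) ^ l
              ≤ (M.card * (l + 1) ^ d) * (M.card * (l + 1) ^ d) ^ l :=
                Nat.mul_le_mul h2 h1
            _ = (M.card * (l + 1) ^ d) ^ (l + 1) := by rw [← pow_succ']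

theorem number_of_decompositions {d l : ℕ} (hd : 0 < d) (hl : 0 < l)
    (n : Fin d → ℕ) (hn : ∀ j, 0 < n j)
    (M : Finset (Finset (Fin d))) (hM : M.Nonempty)
    (A : Set (∀ j, Fin (n j))) (hA : covM n M A = l) :
    {S : Fin l → Set (∀ j, Fin (n j)) |
      (∀ i, IsMSubspace n M (S i)) ∧ A ⊆ ⋃ i, S i}.ncard ≤ (M.card * l ^ d) ^ l :=
  key_lemma hd n M l A hA
end

section
/- Let d ≥ 1 be an integer and let A be a subset of [n₁]×⋯×[n_d]. Then there exist pairwise disjoint subsets X₁ ⊆ [n₁], …, X_d ⊆ [n_d] such that |A ∩ (X₁×⋯×X_d)| ≥ |A \ E| / d^d, where E is the set of points of [n₁]×⋯×[n_d] not having all coordinates pairwise distinct. -/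
open Finset

lemma count_aux {d N : ℕ} (e : Fin d → Fin N)
    (he : Function.Injective e) :
    d ^ (N - d) ≤ (Finset.univ.filter (fun c : Fin N → Fin d => ∀ j, c (e j) = j)).card := by
  classical
  have hcard : Fintype.card {i : Fin N // i ∈ Set.range e} = d := by
    rw [← Fintype.card_congr (Equiv.ofInjective e he), Fintype.card_fin]
  have hcompl : Fintype.card {i : Fin N // i ∉ Set.range e} = N - d := by
    rw [Fintype.card_subtype_compl, hcard, Fintype.card_fin]
  let Φ : ({i : Fin N // i ∉ Set.range e} → Fin d) → (Fin N → Fin d) :=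
    fun g i => if hi : i ∈ Set.range e then hi.choose else g ⟨i, hi⟩
  have hmem : ∀ g, Φ g ∈ Finset.univ.filter (fun c : Fin N → Fin d => ∀ j, c (e j) = j) := by
    intro g
    simp only [mem_filter, mem_univ, true_and]
    intro j
    have hj : e j ∈ Set.range e := ⟨j, rfl⟩
    have : Φ g (e j) = hj.choose := dif_pos hj
    rw [this]
    exact he hj.choose_spec
  have hinj : Function.Injective Φ := by
    intro g g' hgg
    funext i
    have h1 : Φ g i.1 = g ⟨i.1, i.2⟩ := dif_neg i.2
    have h2 : Φ g' i.1 = g' ⟨i.1, i.2⟩ := dif_neg i.2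
    rw [← h1, ← h2, hgg]
  calc d ^ (N - d) = Fintype.card ({i : Fin N // i ∉ Set.range e} → Fin d) := by
        rw [Fintype.card_fun, hcompl, Fintype.card_fin]
    _ ≤ _ := by
        rw [← Finset.card_univ]
        exact Finset.card_le_card_of_injOn Φ (fun g _ => hmem g) hinj.injOn

theorem probabilistic_restriction {d : ℕ} (hd : 0 < d) (n : Fin d → ℕ) (hn : ∀ j, 0 < n j)
    (A : Set (∀ j, Fin (n j))) :
    ∃ X : ∀ j, Set (Fin (n j)),
      (∀ i j : Fin d, i ≠ j → ∀ a ∈ X i, ∀ b ∈ X j, (a : ℕ) ≠ (b : ℕ)) ∧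
      (A \ {x | ∃ i j : Fin d, i ≠ j ∧ (x i : ℕ) = (x j : ℕ)}).ncard ≤
        d ^ d * (A ∩ {x | ∀ j, x j ∈ X j}).ncard := by
  classical
  set N := max d (Finset.univ.sup n) with hNdef
  have hdN : d ≤ N := le_max_left _ _
  have hlt : ∀ (j : Fin d) (a : Fin (n j)), (a : ℕ) < N := fun j a =>
    lt_of_lt_of_le a.2 (le_trans (Finset.le_sup (Finset.mem_univ j)) (le_max_right _ _))
  -- the candidate sets, for each coloring c
  let X : (Fin N → Fin d) → ∀ j, Set (Fin (n j)) := fun c j => {a | c ⟨a, hlt j a⟩ = j}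
  have hdisj : ∀ c, ∀ i j : Fin d, i ≠ j → ∀ a ∈ X c i, ∀ b ∈ X c j, (a : ℕ) ≠ (b : ℕ) := by
    intro c i j hij a ha b hb hab
    apply hij
    have : (⟨(a : ℕ), hlt i a⟩ : Fin N) = ⟨(b : ℕ), hlt j b⟩ := by
      exact Fin.ext hab
    rw [← ha, ← hb, this]
  -- the finset version of A \ E
  set F : Finset (∀ j, Fin (n j)) :=
    Finset.univ.filter (fun x => x ∈ A ∧ ¬∃ i j : Fin d, i ≠ j ∧ (x i : ℕ) = (x j : ℕ))
    with hFdef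
  have hAE : A \ {x | ∃ i j : Fin d, i ≠ j ∧ (x i : ℕ) = (x j : ℕ)} = ↑F := by
    ext x
    simp [hFdef, Set.mem_diff]
  -- the finset version of A ∩ X-product
  have hAX : ∀ c, A ∩ {x | ∀ j, x j ∈ X c j} =
      ↑(Finset.univ.filter (fun x => x ∈ A ∧ ∀ j, x j ∈ X c j)) := by
    intro c
    ext x
    simp [Set.mem_inter_iff]
  -- the embedding of a point into Fin N
  let e : (∀ j, Fin (n j)) → Fin d → Fin N := fun x j => ⟨x j, hlt j (x j)⟩
  have he : ∀ x ∈ F, Function.Injective (e x) := by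
    intro x hx
    simp only [hFdef, mem_filter, mem_univ, true_and] at hx
    intro i j hij
    by_contra hne
    exact hx.2 ⟨i, j, hne, congrArg Fin.val hij⟩
  -- key counting inequality
  have key : F.card * d ^ (N - d) ≤
      ∑ c : Fin N → Fin d, (Finset.univ.filter (fun x => x ∈ A ∧ ∀ j, x j ∈ X c j)).card := by
    calc F.card * d ^ (N - d) = ∑ _x ∈ F, d ^ (N - d) := by rw [sum_const, smul_eq_mul]
      _ ≤ ∑ x ∈ F, (Finset.univ.filter (fun c : Fin N → Fin d => ∀ j, c (e x j) = j)).card :=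
          Finset.sum_le_sum (fun x hx => count_aux (e x) (he x hx))
      _ ≤ ∑ x ∈ F, (Finset.univ.filter (fun c : Fin N → Fin d =>
            x ∈ A ∧ ∀ j, x j ∈ X c j)).card := by
          refine Finset.sum_le_sum (fun x hx => Finset.card_le_card ?_)
          simp only [hFdef, mem_filter, mem_univ, true_and] at hx
          intro c hc
          simp only [mem_filter, mem_univ, true_and] at hc ⊢
          exact ⟨hx.1, fun j => hc j⟩
      _ ≤ ∑ x : (∀ j, Fin (n j)), (Finset.univ.filter (fun c : Fin N → Fin d =>
            x ∈ A ∧ ∀ j, x j ∈ X c j)).card :=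
          Finset.sum_le_sum_of_subset (Finset.subset_univ F)
      _ = ∑ c : Fin N → Fin d, (Finset.univ.filter (fun x => x ∈ A ∧ ∀ j, x j ∈ X c j)).card := by
          simp_rw [Finset.card_filter]
          exact Finset.sum_comm
  -- pigeonhole: some coloring does at least as well as the average
  have : Nonempty (Fin N → Fin d) := ⟨fun _ => ⟨0, hd⟩⟩
  obtain ⟨c, -, hc⟩ := Finset.exists_le_of_sum_le (s := (Finset.univ : Finset (Fin N → Fin d)))
    (f := fun _ => F.card * d ^ (N - d))
    (g := fun c => d ^ N * (Finset.univ.filter (fun x => x ∈ A ∧ ∀ j, x j ∈ X c j)).card)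
    Finset.univ_nonempty (by
      rw [Finset.sum_const, ← Finset.mul_sum, Finset.card_univ, Fintype.card_fun,
        Fintype.card_fin, Fintype.card_fin, smul_eq_mul]
      exact Nat.mul_le_mul_left _ key)
  refine ⟨X c, hdisj c, ?_⟩
  rw [hAE, hAX c, Set.ncard_coe_finset, Set.ncard_coe_finset]
  -- cancel d ^ (N - d)
  have hpow : d ^ N = d ^ (N - d) * d ^ d := by
    rw [← pow_add, Nat.sub_add_cancel hdN]
  rw [hpow] at hc
  have hc' : d ^ (N - d) * F.card ≤ d ^ (N - d) *
      (d ^ d * (Finset.univ.filter (fun x => x ∈ A ∧ ∀ j, x j ∈ X c j)).card) := by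
    calc d ^ (N - d) * F.card = F.card * d ^ (N - d) := mul_comm _ _
      _ ≤ d ^ (N - d) * d ^ d * (Finset.univ.filter (fun x => x ∈ A ∧ ∀ j, x j ∈ X c j)).card := hc
      _ = _ := by ring
  exact Nat.le_of_mul_le_mul_left hc' (Nat.pow_pos hd)
end
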